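/- Under the same setup, there exists yₙ → ∞ such that conditionally on {Mₙ ≥ aₙxₙ}, with probability tending to 1 exactly one of ξ₁,…,ξₙ exceeds aₙxₙ while all others are smaller than xₙ/yₙ. -/

import Mathlib

open Filter MeasureTheory ProbabilityTheory Topology

/-!
With `p = F̄(aₙxₙ)` and `q = F̄(xₙ/yₙ)`, independence gives `P(Mₙ ≥ aₙxₙ) = 1 - (1 - p)ⁿ ≥ np/2`
as soon as `np ≤ 1`, while the event that some `ξᵢ ≥ aₙxₙ` but another `ξⱼ ≥ xₙ/yₙ` has
probability at most `n²pq`; so the conditional probability is at least `1 - 2nq`.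
Karamata's theorem `ℓ(z) = o(G(z))` together with `xₙ ≳ nG(xₙ)` gives `nF̄(xₙ) → 0`, slow
variation upgrades this to `nF̄(λxₙ) → 0` for every fixed `λ > 0`, and a diagonal argument
produces `yₙ → ∞` with `nF̄(xₙ/yₙ) → 0`.
-/

def SlowlyVarying (ℓ : ℝ → ℝ) : Prop :=
  ∀ l > (0 : ℝ), Tendsto (fun x => ℓ (l * x) / ℓ x) atTop (𝓝 1)

namespace SlowlyVarying

variable {ℓ : ℝ → ℝ}

lemma eventually_ne_zero (h : SlowlyVarying ℓ) : ∀ᶠ x in atTop, ℓ x ≠ 0 := by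
  filter_upwards [(h 1 one_pos).eventually_ne one_ne_zero] with x hx h0
  simp [h0] at hx

lemma eventually_half_le (h : SlowlyVarying ℓ) (hpos : ∀ᶠ x in atTop, 0 < ℓ x) {l : ℝ}
    (hl : 0 < l) : ∀ᶠ x in atTop, ℓ x / 2 ≤ ℓ (l * x) := by
  filter_upwards [hpos, (h l hl).eventually (le_mem_nhds one_half_lt_one)] with x hx hlx
  rw [le_div_iff₀ hx] at hlx
  linarith

end SlowlyVarying

lemma Nat.exists_tendsto_atTop_eventually {P : ℕ → ℕ → Prop}
    (h : ∀ k, ∀ᶠ n in atTop, P k n) :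
    ∃ g : ℕ → ℕ, Tendsto g atTop atTop ∧ ∀ᶠ n in atTop, P (g n) n := by
  classical
  refine ⟨fun n => Nat.findGreatest (P · n) n, tendsto_atTop.2 fun k => ?_, ?_⟩
  · filter_upwards [h k, eventually_ge_atTop k] with n hkn hn
    exact Nat.le_findGreatest hn hkn
  · filter_upwards [h 0] with n hn
    exact Nat.findGreatest_spec (P := (P · n)) (zero_le n) hn

section Tail

variable {F ℓ : ℝ → ℝ}

lemma Antitone.sub_mul_le_intervalIntegral (hF : Antitone F) {a b : ℝ} (hab : a ≤ b) :
    (b - a) * F b ≤ ∫ t in a..b, F t := by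
  simpa using intervalIntegral.integral_mono_on hab (intervalIntegrable_const (μ := volume))
    hF.intervalIntegrable fun t ht => hF ht.2

lemma Antitone.sum_le_intervalIntegral (hF : Antitone F) (hF0 : 0 ≤ F) {z : ℝ} (hz : 0 ≤ z)
    (m : ℕ) : ∑ k ∈ Finset.range m, z / 2 ^ (k + 1) * F (z / 2 ^ k) ≤ ∫ t in 0..z, F t := by
  have hhalf : ∀ w, 0 ≤ w → w / 2 * F w ≤ (∫ t in 0..w, F t) - ∫ t in 0..w / 2, F t := by
    intro w hw
    rw [intervalIntegral.integral_interval_sub_left hF.intervalIntegrable hF.intervalIntegrable]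
    convert hF.sub_mul_le_intervalIntegral (by linarith : w / 2 ≤ w) using 2
    ring
  calc ∑ k ∈ Finset.range m, z / 2 ^ (k + 1) * F (z / 2 ^ k)
      ≤ ∑ k ∈ Finset.range m, ((∫ t in 0..z / 2 ^ k, F t) - ∫ t in 0..z / 2 ^ (k + 1), F t) :=
        Finset.sum_le_sum fun k _ => by
          simpa only [div_div, ← pow_succ] using hhalf (z / 2 ^ k) (by positivity)
    _ = (∫ t in 0..z, F t) - ∫ t in 0..z / 2 ^ m, F t := by
        rw [Finset.sum_range_sub']
        simp
    _ ≤ ∫ t in 0..z, F t :=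
        sub_le_self _ (intervalIntegral.integral_nonneg (by positivity) fun t _ => hF0 t)

lemma eventually_pos_of_slowlyVarying (hF0 : 0 ≤ F) (hℓ : ∀ x > 0, ℓ x = x * F x)
    (hslow : SlowlyVarying ℓ) : ∀ᶠ x in atTop, 0 < ℓ x := by
  filter_upwards [hslow.eventually_ne_zero, eventually_gt_atTop 0] with x hne hx
  exact (hℓ x hx ▸ mul_nonneg hx.le (hF0 x)).lt_of_ne' hne

lemma pos_of_slowlyVarying (hF : Antitone F) (hF0 : 0 ≤ F) (hℓ : ∀ x > 0, ℓ x = x * F x)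
    (hslow : SlowlyVarying ℓ) (t : ℝ) : 0 < F t := by
  obtain ⟨z, hz, htz⟩ :=
    ((eventually_pos_of_slowlyVarying hF0 hℓ hslow).and (eventually_gt_atTop (max t 0))).exists
  have hz0 : 0 < z := (le_max_right t 0).trans_lt htz
  rw [hℓ z hz0] at hz
  exact (pos_of_mul_pos_right hz hz0.le).trans_le (hF ((le_max_left t 0).trans htz.le))

theorem tendsto_div_integral_of_slowlyVarying (hF : Antitone F) (hF0 : 0 ≤ F)
    (hℓ : ∀ x > 0, ℓ x = x * F x) (hslow : SlowlyVarying ℓ) :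
    Tendsto (fun z => ℓ z / ∫ t in Set.Ioc 0 z, F t) atTop (𝓝 0) := by
  have hpos := eventually_pos_of_slowlyVarying hF0 hℓ hslow
  have hbound : ∀ m : ℕ, ∀ᶠ z in atTop, m * ℓ z ≤ 4 * ∫ t in Set.Ioc 0 z, F t := by
    intro m
    have hall : ∀ᶠ z in atTop, ∀ k ∈ Finset.range m, ℓ z / 2 ≤ ℓ ((2 ^ k)⁻¹ * z) :=
      (Finset.range m).eventually_all.2 fun k _ => hslow.eventually_half_le hpos (by positivity)
    filter_upwards [hall, eventually_gt_atTop 0] with z hz hz0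
    -- each dyadic piece `(z / 2 ^ (k + 1), z / 2 ^ k]` carries at least `ℓ (z / 2 ^ k) / 2`
    rw [← intervalIntegral.integral_of_le hz0.le]
    calc m * ℓ z = 4 * ∑ _k ∈ Finset.range m, ℓ z / 4 := by simp; ring
      _ ≤ 4 * ∑ k ∈ Finset.range m, z / 2 ^ (k + 1) * F (z / 2 ^ k) := by
          gcongr with k hk
          have := hz k hk
          rw [hℓ ((2 ^ k)⁻¹ * z) (by positivity)] at this
          rw [pow_succ, ← div_div, div_mul_eq_mul_div, ← inv_mul_eq_div (2 ^ k)]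
          linarith
      _ ≤ 4 * ∫ t in 0..z, F t := by gcongr; exact hF.sum_le_intervalIntegral hF0 hz0.le m
  refine tendsto_order.2 ⟨fun b hb => ?_, fun ε hε => ?_⟩
  · filter_upwards [hpos] with z hz
    exact hb.trans_le (div_nonneg hz.le (setIntegral_nonneg measurableSet_Ioc fun t _ => hF0 t))
  · obtain ⟨m, hm⟩ := exists_nat_gt (4 / ε)
    filter_upwards [hbound m, hpos] with z hmz hz
    have hm0 : (0 : ℝ) < m := (div_pos four_pos hε).trans hm
    have hG : 0 < ∫ t in Set.Ioc 0 z, F t := by nlinarith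
    rw [div_lt_iff₀ hG]
    rw [div_lt_iff₀ hε] at hm
    nlinarith

lemma Antitone.tendsto_atTop_of_tendsto_zero (hF : Antitone F) (hFpos : ∀ t, 0 < F t)
    {α : Type*} {l : Filter α} {x : α → ℝ} (h : Tendsto (fun n => F (x n)) l (𝓝 0)) :
    Tendsto x l atTop :=
  tendsto_atTop.2 fun M => by
    filter_upwards [h.eventually (gt_mem_nhds (hFpos M))] with n hn
    exact (hF.reflect_lt hn).le

lemma tendsto_div_of_slowlyVarying (hFpos : ∀ t, 0 < F t) (hℓ : ∀ x > 0, ℓ x = x * F x)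
    (hslow : SlowlyVarying ℓ) {l : ℝ} (hl : 0 < l) :
    Tendsto (fun x => F (l * x) / F x) atTop (𝓝 l⁻¹) := by
  refine (by simpa using (hslow l hl).mul_const l⁻¹ : Tendsto _ _ (𝓝 l⁻¹)).congr' ?_
  filter_upwards [eventually_gt_atTop 0] with x hx
  rw [hℓ x hx, hℓ (l * x) (by positivity)]
  have := hFpos x
  field_simp

theorem tendsto_atTop_and_natCast_mul_of_le_div (hF : Antitone F) (hF0 : 0 ≤ F)
    (hℓ : ∀ x > 0, ℓ x = x * F x) (hslow : SlowlyVarying ℓ) {x : ℕ → ℝ} {c : ℝ} (hc : 0 < c)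
    (hcx : ∀ᶠ n in atTop, c ≤ x n / (n * ∫ t in Set.Ioc 0 (x n), F t)) :
    Tendsto x atTop atTop ∧ Tendsto (fun n => n * F (x n)) atTop (𝓝 0) := by
  set G : ℝ → ℝ := fun z => ∫ t in Set.Ioc 0 z, F t
  have hbound : ∀ᶠ n in atTop,
      n * F (x n) ≤ c⁻¹ * (ℓ (x n) / G (x n)) ∧ ℓ (x n) / G (x n) ≤ 1 := by
    filter_upwards [hcx] with n hn
    have hG0 : 0 ≤ (n : ℝ) * G (x n) :=
      mul_nonneg n.cast_nonneg (setIntegral_nonneg measurableSet_Ioc fun t _ => hF0 t)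
    obtain ⟨hx, hnG⟩ : 0 < x n ∧ 0 < (n : ℝ) * G (x n) :=
      (div_pos_iff.1 (hc.trans_le hn)).resolve_right fun h => h.2.not_ge hG0
    have hG : 0 < G (x n) := pos_of_mul_pos_right hnG n.cast_nonneg
    constructor
    · have hn' : (n : ℝ) ≤ c⁻¹ * (x n / G (x n)) := by
        rw [le_div_iff₀ hnG] at hn
        rw [← div_eq_inv_mul, le_div_iff₀ hc, le_div_iff₀ hG]
        linarith
      calc (n : ℝ) * F (x n) ≤ c⁻¹ * (x n / G (x n)) * F (x n) := by gcongr; exact hF0 _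
        _ = c⁻¹ * (ℓ (x n) / G (x n)) := by rw [hℓ _ hx]; ring
    · rw [div_le_one hG, hℓ _ hx]
      show x n * F (x n) ≤ ∫ t in Set.Ioc 0 (x n), F t
      rw [← intervalIntegral.integral_of_le hx.le]
      simpa using hF.sub_mul_le_intervalIntegral hx.le
  have hFx : Tendsto (fun n => F (x n)) atTop (𝓝 0) := by
    refine squeeze_zero' ?_ ?_ (tendsto_const_div_atTop_nhds_zero_nat c⁻¹)
    · exact Eventually.of_forall fun n => hF0 _
    · filter_upwards [hbound, eventually_gt_atTop 0] with n hn hn0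
      rw [le_div_iff₀ (by positivity), mul_comm]
      exact hn.1.trans (mul_le_of_le_one_right (inv_nonneg.2 hc.le) hn.2)
  have hxtop := hF.tendsto_atTop_of_tendsto_zero (pos_of_slowlyVarying hF hF0 hℓ hslow) hFx
  refine ⟨hxtop, squeeze_zero' ?_ ?_ (by
    simpa using ((tendsto_div_integral_of_slowlyVarying hF hF0 hℓ hslow).comp hxtop).const_mul c⁻¹)⟩
  · exact Eventually.of_forall fun n => mul_nonneg n.cast_nonneg (hF0 _)
  · filter_upwards [hbound] with n hn using hn.1

lemma tendsto_natCast_mul_comp_const_mul (hFpos : ∀ t, 0 < F t) (hℓ : ∀ x > 0, ℓ x = x * F x)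
    (hslow : SlowlyVarying ℓ) {x : ℕ → ℝ} (hx : Tendsto x atTop atTop)
    (h : Tendsto (fun n => n * F (x n)) atTop (𝓝 0)) {l : ℝ} (hl : 0 < l) :
    Tendsto (fun n => n * F (l * x n)) atTop (𝓝 0) := by
  have := h.mul ((tendsto_div_of_slowlyVarying hFpos hℓ hslow hl).comp hx)
  rw [zero_mul] at this
  refine this.congr fun n => ?_
  have := hFpos (x n)
  simp only [Function.comp_apply]
  field_simp

theorem exists_tendsto_atTop_natCast_mul_div (hF0 : 0 ≤ F) {x : ℕ → ℝ}
    (hx : Tendsto x atTop atTop) (h : ∀ l > 0, Tendsto (fun n => n * F (l * x n)) atTop (𝓝 0)) :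
    ∃ y : ℕ → ℝ, Tendsto y atTop atTop ∧ Tendsto (fun n => y n / x n) atTop (𝓝 0) ∧
      Tendsto (fun n => n * F (x n / y n)) atTop (𝓝 0) := by
  -- the second condition makes `y n / x n ≤ (y n)⁻¹`
  obtain ⟨g, hg, hgn⟩ := Nat.exists_tendsto_atTop_eventually (P := fun k n =>
      (n : ℝ) * F (x n / (k + 1)) ≤ ((k : ℝ) + 1)⁻¹ ∧ ((k : ℝ) + 1) ^ 2 ≤ x n) fun k => by
    have hk : (0 : ℝ) < k + 1 := by positivity
    filter_upwards [(h _ (inv_pos.2 hk)).eventually (ge_mem_nhds (inv_pos.2 hk)),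
      hx.eventually_ge_atTop ((k + 1) ^ 2)] with n h1 h2
    exact ⟨by rwa [div_eq_inv_mul], h2⟩
  set y : ℕ → ℝ := fun n => g n + 1
  have hy : Tendsto y atTop atTop :=
    tendsto_atTop_add_const_right _ 1 (tendsto_natCast_atTop_atTop.comp hg)
  have hy0 : ∀ n, 0 < y n := fun n => by positivity
  refine ⟨y, hy, squeeze_zero' ?_ ?_ hy.inv_tendsto_atTop,
    squeeze_zero' ?_ ?_ hy.inv_tendsto_atTop⟩
  · filter_upwards [hgn] with n hn
    exact div_nonneg (hy0 n).le ((sq_nonneg _).trans hn.2)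
  · filter_upwards [hgn] with n hn
    have hxn : 0 < x n := (pow_pos (hy0 n) 2).trans_le hn.2
    rw [Pi.inv_apply, div_le_iff₀ hxn]
    calc y n = y n ^ 2 * (y n)⁻¹ := by field_simp
      _ ≤ x n * (y n)⁻¹ := by gcongr; exact hn.2
      _ = (y n)⁻¹ * x n := mul_comm _ _
  · exact Eventually.of_forall fun n => mul_nonneg n.cast_nonneg (hF0 _)
  · filter_upwards [hgn] with n hn using hn.1

end Tail

lemma one_sub_pow_le (n : ℕ) {p : ℝ} (h0 : 0 ≤ p) (h1 : p ≤ 1) :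
    (1 - p) ^ n ≤ 1 - n * p + (n * p) ^ 2 / 2 := by
  induction n with
  | zero => simp
  | succ n ih =>
    push_cast
    calc (1 - p) ^ (n + 1) = (1 - p) ^ n * (1 - p) := pow_succ _ _
      _ ≤ (1 - n * p + (n * p) ^ 2 / 2) * (1 - p) := by gcongr
      _ ≤ 1 - (n + 1) * p + ((n + 1) * p) ^ 2 / 2 := by
        nlinarith [mul_nonneg (mul_nonneg (sq_nonneg (n * p)) h0) (n.cast_nonneg : (0 : ℝ) ≤ n)]

lemma mul_div_two_le_one_sub_pow {n : ℕ} {p : ℝ} (h0 : 0 ≤ p) (hnp : n * p ≤ 1) :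
    n * p / 2 ≤ 1 - (1 - p) ^ n := by
  rcases n.eq_zero_or_pos with rfl | hn
  · simp
  have h1 : p ≤ 1 := le_trans (le_mul_of_one_le_left h0 (by exact_mod_cast hn)) hnp
  nlinarith [one_sub_pow_le n h0 h1, mul_nonneg (mul_nonneg n.cast_nonneg h0) (sub_nonneg.2 hnp)]

section IID

variable {Ω : Type*} [MeasurableSpace Ω] {μ : Measure Ω} [IsProbabilityMeasure μ]
  {ξ : ℕ → Ω → ℝ}

lemma measureReal_exists_le_eq (hmeas : ∀ i, Measurable (ξ i)) (hindep : iIndepFun ξ μ)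
    (hident : ∀ i, IdentDistrib (ξ i) (ξ 0) μ μ) (n : ℕ) (u : ℝ) :
    μ.real {ω | ∃ i < n, u ≤ ξ i ω} = 1 - (1 - μ.real {ω | u ≤ ξ 0 ω}) ^ n := by
  have hcompl : {ω | ∃ i < n, u ≤ ξ i ω}ᶜ = ⋂ i ∈ Finset.range n, ξ i ⁻¹' Set.Iio u := by
    ext; simp
  have hlt : ∀ i, μ.real (ξ i ⁻¹' Set.Iio u) = 1 - μ.real {ω | u ≤ ξ 0 ω} := fun i => by
    rw [measureReal_def, (hident i).measure_mem_eq measurableSet_Iio, ← measureReal_def,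
      ← probReal_compl_eq_one_sub (measurableSet_le measurable_const (hmeas 0))]
    congr 1
    ext; simp
  have hprod : μ.real {ω | ∃ i < n, u ≤ ξ i ω}ᶜ = (1 - μ.real {ω | u ≤ ξ 0 ω}) ^ n := by
    rw [hcompl, measureReal_def,
      hindep.meas_biInter fun i _ => ⟨Set.Iio u, measurableSet_Iio, rfl⟩, ENNReal.toReal_prod]
    simp only [← measureReal_def, hlt, Finset.prod_const, Finset.card_range]
  have hmeasD : MeasurableSet {ω | ∃ i < n, u ≤ ξ i ω}ᶜ := by
    rw [hcompl]
    exact Finset.measurableSet_biInter _ fun i _ => hmeas i measurableSet_Iio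
  rw [← hprod, ← probReal_compl_eq_one_sub hmeasD, compl_compl]

lemma measureReal_exists_le_le (hindep : iIndepFun ξ μ)
    (hident : ∀ i, IdentDistrib (ξ i) (ξ 0) μ μ) (n : ℕ) (u v : ℝ) :
    μ.real {ω | ∃ i < n, u ≤ ξ i ω} ≤
      μ.real {ω | ∃ i < n, u ≤ ξ i ω ∧ ∀ j < n, j ≠ i → ξ j ω < v} +
        n ^ 2 * (μ.real {ω | u ≤ ξ 0 ω} * μ.real {ω | v ≤ ξ 0 ω}) := by
  set E := {ω | ∃ i < n, u ≤ ξ i ω ∧ ∀ j < n, j ≠ i → ξ j ω < v}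
  set B : ℕ × ℕ → Set Ω := fun ij => ξ ij.1 ⁻¹' Set.Ici u ∩ ξ ij.2 ⁻¹' Set.Ici v
  have hsub : {ω | ∃ i < n, u ≤ ξ i ω} ⊆ E ∪ ⋃ ij ∈ (Finset.range n).offDiag, B ij := by
    rintro ω ⟨i, hi, hui⟩
    by_cases hE : ω ∈ E
    · exact Or.inl hE
    · obtain ⟨j, hj, hji, hvj⟩ : ∃ j < n, j ≠ i ∧ v ≤ ξ j ω := by
        by_contra! h
        exact hE ⟨i, hi, hui, h⟩
      exact Or.inr (Set.mem_biUnion (x := (i, j))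
        (Finset.mem_offDiag.2 ⟨Finset.mem_range.2 hi, Finset.mem_range.2 hj, hji.symm⟩)
        ⟨hui, hvj⟩)
  have hB : ∀ ij ∈ (Finset.range n).offDiag,
      μ.real (B ij) = μ.real {ω | u ≤ ξ 0 ω} * μ.real {ω | v ≤ ξ 0 ω} := by
    rintro ⟨i, j⟩ hij
    have hindep_ij := hindep.indepFun (Finset.mem_offDiag.1 hij).2.2
    rw [measureReal_def, hindep_ij.measure_inter_preimage_eq_mul
      _ _ measurableSet_Ici measurableSet_Ici, (hident i).measure_mem_eq measurableSet_Ici,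
      (hident j).measure_mem_eq measurableSet_Ici, ENNReal.toReal_mul]
    rfl
  have hcard : (((Finset.range n).offDiag.card : ℕ) : ℝ) ≤ n ^ 2 := by
    rw [Finset.offDiag_card, Finset.card_range, sq]
    exact_mod_cast Nat.sub_le _ _
  calc μ.real {ω | ∃ i < n, u ≤ ξ i ω}
      ≤ μ.real E + μ.real (⋃ ij ∈ (Finset.range n).offDiag, B ij) :=
        (measureReal_mono hsub).trans (measureReal_union_le _ _)
    _ ≤ μ.real E + ∑ ij ∈ (Finset.range n).offDiag, μ.real (B ij) := by
        gcongr; exact measureReal_biUnion_finset_le _ _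
    _ ≤ μ.real E + n ^ 2 * (μ.real {ω | u ≤ ξ 0 ω} * μ.real {ω | v ≤ ξ 0 ω}) := by
        rw [Finset.sum_congr rfl hB, Finset.sum_const, nsmul_eq_mul]
        gcongr

theorem one_sub_two_mul_le_measureReal_div (hmeas : ∀ i, Measurable (ξ i))
    (hindep : iIndepFun ξ μ) (hident : ∀ i, IdentDistrib (ξ i) (ξ 0) μ μ) {n : ℕ} (hn : 0 < n)
    {u v : ℝ} (hp : 0 < μ.real {ω | u ≤ ξ 0 ω}) (hnp : n * μ.real {ω | u ≤ ξ 0 ω} ≤ 1) :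
    1 - 2 * (n * μ.real {ω | v ≤ ξ 0 ω}) ≤
      μ.real {ω | (∃ i < n, u ≤ ξ i ω ∧ ∀ j < n, j ≠ i → ξ j ω < v) ∧ ∃ i < n, u ≤ ξ i ω} /
        μ.real {ω | ∃ i < n, u ≤ ξ i ω} := by
  set p := μ.real {ω | u ≤ ξ 0 ω}
  set q := μ.real {ω | v ≤ ξ 0 ω}
  set D := {ω | ∃ i < n, u ≤ ξ i ω}
  have hE : {ω | (∃ i < n, u ≤ ξ i ω ∧ ∀ j < n, j ≠ i → ξ j ω < v) ∧ ∃ i < n, u ≤ ξ i ω} =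
      {ω | ∃ i < n, u ≤ ξ i ω ∧ ∀ j < n, j ≠ i → ξ j ω < v} :=
    Set.sep_eq_self_iff_mem_true.2 fun ω ⟨i, hi, hui, _⟩ => ⟨i, hi, hui⟩
  have hD : n * p / 2 ≤ μ.real D := by
    rw [measureReal_exists_le_eq hmeas hindep hident]
    exact mul_div_two_le_one_sub_pow hp.le hnp
  have hD0 : 0 < μ.real D := lt_of_lt_of_le (by positivity) hD
  have hq : 0 ≤ q := measureReal_nonneg
  rw [hE, le_div_iff₀ hD0]
  -- `μ D - μ E ≤ n²pq = nq · np ≤ 2nq · μ D`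
  nlinarith [measureReal_exists_le_le hindep hident n u v, mul_le_mul_of_nonneg_left hD
    (by positivity : (0 : ℝ) ≤ 2 * (n * q))]

end IID

theorem stmt15_general {Ω : Type*} [MeasurableSpace Ω] (μ : Measure Ω) [IsProbabilityMeasure μ]
    (ξ : ℕ → Ω → ℝ) (hmeas : ∀ i, Measurable (ξ i))
    (hindep : iIndepFun ξ μ)
    (hident : ∀ i, IdentDistrib (ξ i) (ξ 0) μ μ)
    (ℓ Fbar G : ℝ → ℝ)
    (hFbar : ∀ x, Fbar x = (μ {ω | x ≤ ξ 0 ω}).toReal)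
    (htail : ∀ x > (0:ℝ), Fbar x = ℓ x / x)
    (hslow : ∀ l > (0:ℝ), Tendsto (fun x => ℓ (l * x) / ℓ x) atTop (nhds 1))
    (hG : ∀ x, G x = ∫ t in Set.Ioc 0 x, Fbar t)
    (x a : ℕ → ℝ)
    (hliminf : ∃ c > (0:ℝ), ∀ᶠ (n : ℕ) in atTop, c ≤ x n / ((n : ℝ) * G (x n)))
    (A : ℝ) (hA : 0 < A) (ha : Tendsto a atTop (nhds A)) :
    ∃ y : ℕ → ℝ, Tendsto y atTop atTop ∧
      Tendsto (fun n => y n / x n) atTop (nhds 0) ∧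
      Tendsto (fun (n : ℕ) =>
        (μ {ω | (∃ i < n, a n * x n ≤ ξ i ω ∧ ∀ j < n, j ≠ i → ξ j ω < x n / y n)
              ∧ ∃ i < n, a n * x n ≤ ξ i ω}).toReal
          / (μ {ω | ∃ i < n, a n * x n ≤ ξ i ω}).toReal)
        atTop (nhds 1) := by
  have hFbar' : ∀ t, Fbar t = μ.real {ω | t ≤ ξ 0 ω} := hFbar
  have hanti : Antitone Fbar := fun s t hst => by
    rw [hFbar', hFbar']
    exact measureReal_mono fun ω (h : t ≤ ξ 0 ω) => hst.trans h
  have hF0 : 0 ≤ Fbar := fun t => by rw [hFbar']; exact measureReal_nonneg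
  have hℓ : ∀ x > 0, ℓ x = x * Fbar x := fun x hx => by rw [htail x hx]; field_simp
  have hFpos := pos_of_slowlyVarying hanti hF0 hℓ hslow
  obtain ⟨c, hc, hcx⟩ := hliminf
  obtain ⟨hxtop, hnx⟩ :=
    tendsto_atTop_and_natCast_mul_of_le_div hanti hF0 hℓ hslow hc (by simpa only [hG] using hcx)
  have hscale := fun l (hl : 0 < l) =>
    tendsto_natCast_mul_comp_const_mul hFpos hℓ hslow hxtop hnx hl
  obtain ⟨y, hy, hyx, hny⟩ := exists_tendsto_atTop_natCast_mul_div hF0 hxtop hscale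
  have hna : Tendsto (fun n => n * Fbar (a n * x n)) atTop (𝓝 0) := by
    refine squeeze_zero' (Eventually.of_forall fun n => mul_nonneg n.cast_nonneg (hF0 _)) ?_
      (hscale (A / 2) (by positivity))
    filter_upwards [ha.eventually_const_le (half_lt_self hA), hxtop.eventually_ge_atTop 0]
      with n han hxn
    exact mul_le_mul_of_nonneg_left (hanti (mul_le_mul_of_nonneg_right han hxn)) n.cast_nonneg
  have hlower : Tendsto (fun n => 1 - 2 * (n * Fbar (x n / y n))) atTop (𝓝 1) := by
    simpa using (hny.const_mul 2).const_sub 1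
  refine ⟨y, hy, hyx, tendsto_of_tendsto_of_tendsto_of_le_of_le' hlower tendsto_const_nhds ?_ ?_⟩
  · filter_upwards [hna.eventually (ge_mem_nhds one_pos), eventually_gt_atTop 0] with n hn hn0
    rw [hFbar'] at hn
    have := one_sub_two_mul_le_measureReal_div hmeas hindep hident hn0
      (by rw [← hFbar']; exact hFpos _) hn (v := x n / y n)
    rwa [← hFbar'] at this
  · exact Eventually.of_forall fun n =>
      div_le_one_of_le₀ (measureReal_mono fun ω h => h.2) measureReal_nonneg

/-- Remark (conditioned on the sum being large): there is `yₙ → ∞`, `yₙ = o(xₙ)`, such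
that, conditionally on `{Mₙ ≥ aₙxₙ}`, with probability tending to one exactly
one `ξᵢ` exceeds `aₙxₙ` while all the others are smaller than `xₙ/yₙ`. -/
theorem stmt15 {Ω : Type*} [MeasurableSpace Ω] (μ : Measure Ω) [IsProbabilityMeasure μ]
    (ξ : ℕ → Ω → ℝ) (hmeas : ∀ i, Measurable (ξ i))
    (hindep : iIndepFun ξ μ)
    (hident : ∀ i, IdentDistrib (ξ i) (ξ 0) μ μ)
    (hξ0 : ∀ i ω, 0 ≤ ξ i ω)
    (ℓ Fbar G : ℝ → ℝ)
    (hFbar : ∀ x, Fbar x = (μ {ω | x ≤ ξ 0 ω}).toReal)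
    (htail : ∀ x > (0:ℝ), Fbar x = ℓ x / x)
    (hslow : ∀ l > (0:ℝ), Tendsto (fun x => ℓ (l * x) / ℓ x) atTop (nhds 1))
    (hG : ∀ x, G x = ∫ t in Set.Ioc 0 x, Fbar t)
    (x a : ℕ → ℝ) (hx : ∀ n, 0 < x n) (hapos : ∀ n, 0 < a n)
    (hliminf : ∃ c > (0:ℝ), ∀ᶠ (n : ℕ) in atTop, c ≤ x n / ((n : ℝ) * G (x n)))
    (A : ℝ) (hA : 0 < A) (ha : Tendsto a atTop (nhds A)) :
    ∃ y : ℕ → ℝ, Tendsto y atTop atTop ∧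
      Tendsto (fun n => y n / x n) atTop (nhds 0) ∧
      Tendsto (fun (n : ℕ) =>
        (μ {ω | (∃ i < n, a n * x n ≤ ξ i ω ∧ ∀ j < n, j ≠ i → ξ j ω < x n / y n)
              ∧ ∃ i < n, a n * x n ≤ ξ i ω}).toReal
          / (μ {ω | ∃ i < n, a n * x n ≤ ξ i ω}).toReal)
        atTop (nhds 1) :=
  stmt15_general μ ξ hmeas hindep hident ℓ Fbar G hFbar htail hslow hG x a hliminf A hA ha
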